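/- Let A ∈ ℂ^{n×n}, let P^s be an n×n complex Hermitian positive definite matrix, let Ψ_i, Ψ_j be 2×2 complex Hermitian matrices, and let Q_i, Q_j be n×n complex Hermitian positive definite matrices. Suppose the n×n Hermitian matrix [A; I]* (Φ ⊗ P^s + Ψ_i ⊗ Q_i − Ψ_j ⊗ Q_j) [A; I] is negative definite, where [A; I] denotes the 2n×n block matrix stacking A over I_n. Then for every nonzero x ∈ ℂⁿ satisfying q_{Ψ_j,Q_j}(Ax, x) ≤ q_{Ψ_i,Q_i}(Ax, x), one has x*(A*P^s + P^sA)x < 0. -/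
import Mathlib


open Matrix Complex MeasureTheory
open scoped ComplexOrder

/-- The frequency-weighted quadratic form `q_{Ψ,Q}(u, v) = (u,v)* (Ψ ⊗ Q) (u,v)`. -/
noncomputable def qForm {n : ℕ} (Ψ : Matrix (Fin 2) (Fin 2) ℂ)
    (Q : Matrix (Fin n) (Fin n) ℂ) (u v : Fin n → ℂ) : ℂ :=
  Ψ 0 0 * (star u ⬝ᵥ Q.mulVec u) + Ψ 0 1 * (star u ⬝ᵥ Q.mulVec v)
    + Ψ 1 0 * (star v ⬝ᵥ Q.mulVec u) + Ψ 1 1 * (star v ⬝ᵥ Q.mulVec v)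

/-- The Kronecker product `Ψ ⊗ Q` of a 2×2 matrix with an n×n matrix, written
as a 2×2 block matrix. -/
noncomputable def kron2 {n : ℕ} (Ψ : Matrix (Fin 2) (Fin 2) ℂ)
    (Q : Matrix (Fin n) (Fin n) ℂ) : Matrix (Fin n ⊕ Fin n) (Fin n ⊕ Fin n) ℂ :=
  Matrix.fromBlocks (Ψ 0 0 • Q) (Ψ 0 1 • Q) (Ψ 1 0 • Q) (Ψ 1 1 • Q)

/-- `Φ = [[0, 1], [1, 0]]`. -/
noncomputable def PhiMat : Matrix (Fin 2) (Fin 2) ℂ := !![0, 1; 1, 0]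

/-- A complex matrix is negative definite if it is Hermitian and `v*Mv < 0` for
all `v ≠ 0`. -/
def NegDefinite {k : Type*} [Fintype k] (M : Matrix k k ℂ) : Prop :=
  M.IsHermitian ∧ ∀ v : k → ℂ, v ≠ 0 → (star v ⬝ᵥ M.mulVec v).re < 0

lemma star_sum_elim {n : ℕ} (u v : Fin n → ℂ) :
    star (Sum.elim u v) = Sum.elim (star u) (star v) := by
  funext i; cases i <;> rfl

lemma kron2_quad {n : ℕ} (Ψ : Matrix (Fin 2) (Fin 2) ℂ)
    (Q : Matrix (Fin n) (Fin n) ℂ) (u v : Fin n → ℂ) :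
    star (Sum.elim u v) ⬝ᵥ (kron2 Ψ Q).mulVec (Sum.elim u v) = qForm Ψ Q u v := by
  rw [star_sum_elim, kron2, Matrix.fromBlocks_mulVec, sumElim_dotProduct_sumElim,
    qForm]
  simp [Matrix.smul_mulVec, dotProduct_add, dotProduct_smul]
  ring

/-- Lyapunov decrease at states selected by the frequency-dependent switching law:
if `[A; I]*(Φ⊗P^s + Ψ_i⊗Q_i − Ψ_j⊗Q_j)[A; I] ≺ 0`, then every nonzero state `x`
with `q_{Ψ_j,Q_j}(Ax, x) ≤ q_{Ψ_i,Q_i}(Ax, x)` satisfies `x*(A*P^s + P^sA)x < 0`. -/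
theorem fdsc_lyapunov_derivative_neg {n : ℕ}
    (A : Matrix (Fin n) (Fin n) ℂ)
    (Ps : Matrix (Fin n) (Fin n) ℂ) (hPs : Ps.PosDef)
    (Ψi Ψj : Matrix (Fin 2) (Fin 2) ℂ) (hΨi : Ψi.IsHermitian) (hΨj : Ψj.IsHermitian)
    (Qi Qj : Matrix (Fin n) (Fin n) ℂ) (hQi : Qi.PosDef) (hQj : Qj.PosDef)
    (hM : NegDefinite
      ((Matrix.fromRows A (1 : Matrix (Fin n) (Fin n) ℂ))ᴴ
          * (kron2 PhiMat Ps + kron2 Ψi Qi - kron2 Ψj Qj)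
          * Matrix.fromRows A (1 : Matrix (Fin n) (Fin n) ℂ)))
    (x : Fin n → ℂ) (hx : x ≠ 0)
    (hsw : (qForm Ψj Qj (A.mulVec x) x).re ≤ (qForm Ψi Qi (A.mulVec x) x).re) :
    (star x ⬝ᵥ (Aᴴ * Ps + Ps * A).mulVec x).re < 0 := by
  obtain ⟨_, hneg⟩ := hM
  have h := hneg x hx
  set u := A.mulVec x with hu
  set M := kron2 PhiMat Ps + kron2 Ψi Qi - kron2 Ψj Qj with hMdef
  have hF : (Matrix.fromRows A (1 : Matrix (Fin n) (Fin n) ℂ)).mulVec x = Sum.elim u x := by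
    rw [Matrix.fromRows_mulVec, Matrix.one_mulVec]
  have key : star x ⬝ᵥ ((Matrix.fromRows A (1 : Matrix (Fin n) (Fin n) ℂ))ᴴ * M
        * Matrix.fromRows A (1 : Matrix (Fin n) (Fin n) ℂ)).mulVec x
      = star (Sum.elim u x) ⬝ᵥ M.mulVec (Sum.elim u x) := by
    rw [← Matrix.mulVec_mulVec, ← Matrix.mulVec_mulVec, Matrix.dotProduct_mulVec,
      ← Matrix.star_mulVec, hF]
  have hsplit : star (Sum.elim u x) ⬝ᵥ M.mulVec (Sum.elim u x)
      = qForm PhiMat Ps u x + qForm Ψi Qi u x - qForm Ψj Qj u x := by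
    rw [hMdef]
    simp only [Matrix.sub_mulVec, Matrix.add_mulVec, dotProduct_add,
      dotProduct_sub, kron2_quad]
  have hphi : qForm PhiMat Ps u x = star x ⬝ᵥ (Aᴴ * Ps + Ps * A).mulVec x := by
    rw [qForm]
    have h00 : PhiMat 0 0 = 0 := rfl
    have h01 : PhiMat 0 1 = 1 := rfl
    have h10 : PhiMat 1 0 = 1 := rfl
    have h11 : PhiMat 1 1 = 0 := rfl
    rw [h00, h01, h10, h11, Matrix.add_mulVec, dotProduct_add,
      ← Matrix.mulVec_mulVec, ← Matrix.mulVec_mulVec, Matrix.dotProduct_mulVec (star x) Aᴴ,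
      ← Matrix.star_mulVec, ← hu]
    ring
  rw [key, hsplit, hphi] at h
  have := h
  simp only [Complex.sub_re, Complex.add_re] at this
  linarith
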